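/- arXiv:2210.03996 — 3 statements merged into one kernel-verified Lean document; each statement's English description precedes it below -/
import Mathlib

section
/- The sets {Y(n) − X(n) : n ≥ 1} and {Y(n) + X(n) : n ≥ 1} are disjoint and their union is the set ℕ = {1, 2, 3, …} of all positive integers. -/
open Classical

/-- The pair of sequences OEIS A140100 / A140101, defined greedily:
`XY 0 = (0,0)`, `XY 1 = (1,2)`, and for `n > 1`, `XY n = (x, y)` where `x` is least
(and then `y` least) such that `0 < x < y`, neither `x` nor `y` occurs among the earlier
`X`- or `Y`-values with index `1 ≤ k < n`, and `y - x` occurs among neither the earlier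
differences `Y k - X k` nor the earlier sums `Y k + X k`. -/
noncomputable def XY : ℕ → ℕ × ℕ
  | 0 => (0, 0)
  | 1 => (1, 2)
  | n + 2 =>
      let P : ℕ → ℕ → Prop := fun x y =>
        0 < x ∧ x < y ∧
        ∀ k, 1 ≤ k → k < n + 2 →
          (XY k).1 ≠ x ∧ (XY k).1 ≠ y ∧ (XY k).2 ≠ x ∧ (XY k).2 ≠ y ∧
          (XY k).2 - (XY k).1 ≠ y - x ∧ (XY k).2 + (XY k).1 ≠ y - x
      let x := sInf {x | ∃ y, P x y}
      (x, sInf {y | P x y})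
  termination_by n => n
  decreasing_by all_goals omega

/-- Sequence OEIS A140100. -/
noncomputable def X (n : ℕ) : ℕ := (XY n).1

/-- Sequence OEIS A140101. -/
noncomputable def Y (n : ℕ) : ℕ := (XY n).2

/-- The greedy predicate, in terms of `X` and `Y`. -/
def Q (n x y : ℕ) : Prop :=
  0 < x ∧ x < y ∧
  ∀ k, 1 ≤ k → k < n →
    X k ≠ x ∧ X k ≠ y ∧ Y k ≠ x ∧ Y k ≠ y ∧
    Y k - X k ≠ y - x ∧ Y k + X k ≠ y - x

lemma X_eq (n : ℕ) : X (n + 2) = sInf {x | ∃ y, Q (n + 2) x y} := by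
  show (XY (n+2)).1 = _
  rw [XY]
  rfl

lemma Y_eq (n : ℕ) : Y (n + 2) = sInf {y | Q (n + 2) (X (n + 2)) y} := by
  conv_lhs => rw [Y, XY]
  rw [X_eq]
  rfl

lemma X_one : X 1 = 1 := by rw [X, XY]
lemma Y_one : Y 1 = 2 := by rw [Y, XY]

/-- The main invariant. -/
def InvGreedy (n : ℕ) : Prop :=
  0 < X n ∧ X n < Y n ∧
  (∀ m, 0 < m → m < X n → ∃ k, 1 ≤ k ∧ k < n ∧ (X k = m ∨ Y k = m)) ∧
  (∀ k, 1 ≤ k → k < n →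
    X k ≠ X n ∧ X k ≠ Y n ∧ Y k ≠ X n ∧ Y k ≠ Y n ∧
    Y k - X k ≠ Y n - X n ∧ Y k + X k ≠ Y n - X n) ∧
  (∀ m, 0 < m → m < Y n - X n → ∃ k, 1 ≤ k ∧ k < n ∧ (Y k - X k = m ∨ Y k + X k = m))

lemma inv_all : ∀ n, 1 ≤ n → InvGreedy n := by
  intro n
  induction n using Nat.strong_induction_on with
  | _ n IH =>
    intro hn
    match n, hn with
    | 1, _ =>
      refine ⟨?_, ?_, ?_, ?_, ?_⟩ <;> simp [X_one, Y_one] <;> omega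
    | (m + 2), _ =>
      set n := m + 2 with hn2
      -- basic facts from IH
      have hIH : ∀ k, 1 ≤ k → k < n → InvGreedy k := fun k h1 h2 => IH k h2 h1
      -- a bound dominating all earlier values
      set Bd : ℕ := (Finset.range n).sup (fun k => X k + Y k) with hBd
      have hBd_le : ∀ k, k < n → X k + Y k ≤ Bd := by
        intro k hk
        exact Finset.le_sup (f := fun k => X k + Y k) (Finset.mem_range.mpr hk)
      -- witness construction
      have key : ∀ x, 0 < x → (∀ k, 1 ≤ k → k < n → X k ≠ x ∧ Y k ≠ x) →
          Q n x (x + Bd + 1) := by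
        intro x hx hfresh
        refine ⟨hx, by omega, ?_⟩
        intro k hk1 hk2
        have hb := hBd_le k hk2
        have hf := hfresh k hk1 hk2
        have hsub : x + Bd + 1 - x = Bd + 1 := by omega
        refine ⟨hf.1, by omega, hf.2, by omega, ?_, ?_⟩ <;> rw [hsub] <;> omega
      -- the set A is nonempty
      have hA : (Bd + 1) ∈ {x | ∃ y, Q n x y} := by
        refine ⟨Bd + 1 + Bd + 1, key (Bd + 1) (by omega) ?_⟩
        intro k hk1 hk2
        have hb := hBd_le k hk2
        have hXY := (hIH k hk1 hk2).2.1
        constructor <;> omega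
      have haA : sInf {x | ∃ y, Q n x y} ∈ {x | ∃ y, Q n x y} :=
        Nat.sInf_mem ⟨_, hA⟩
      set a : ℕ := sInf {x | ∃ y, Q n x y} with ha_def
      obtain ⟨y₀, hy₀⟩ := haA
      have ha_pos : 0 < a := hy₀.1
      have ha_fresh : ∀ k, 1 ≤ k → k < n → X k ≠ a ∧ Y k ≠ a := by
        intro k hk1 hk2
        exact ⟨(hy₀.2.2 k hk1 hk2).1, (hy₀.2.2 k hk1 hk2).2.2.1⟩
      -- mex property of a
      have ha_mex : ∀ m', 0 < m' → m' < a → ∃ k, 1 ≤ k ∧ k < n ∧ (X k = m' ∨ Y k = m') := by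
        intro m' hm0 hma
        by_contra hcon
        push_neg at hcon
        have : m' ∈ {x | ∃ y, Q n x y} := by
          refine ⟨m' + Bd + 1, key m' hm0 ?_⟩
          intro k hk1 hk2
          have := hcon k hk1 hk2
          omega
        have := Nat.sInf_le this
        omega
      -- all earlier X-values are below a
      have hXlt : ∀ k, 1 ≤ k → k < n → X k < a := by
        intro k hk1 hk2
        have hne := (ha_fresh k hk1 hk2).1
        by_contra hle
        push_neg at hle
        have hlt : a < X k := by omega
        obtain ⟨j, hj1, hj2, hj3⟩ := (hIH k hk1 hk2).2.2.1 a ha_pos hlt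
        have := ha_fresh j hj1 (by omega)
        omega
      -- the set B is nonempty
      have hB : (a + Bd + 1) ∈ {y | Q n a y} :=
        key a ha_pos ha_fresh
      have hbB : sInf {y | Q n a y} ∈ {y | Q n a y} := Nat.sInf_mem ⟨_, hB⟩
      set b : ℕ := sInf {y | Q n a y} with hb_def
      -- identify X n and Y n
      have hXn : X n = a := X_eq m
      have hYn : Y n = b := by
        have hXn' : X (m + 2) = a := X_eq m
        rw [Y_eq m, hXn']
      have hab : a < b := hbB.2.1
      have hfresh_ab := hbB.2.2
      refine ⟨?_, ?_, ?_, ?_, ?_⟩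
      · rw [hXn]; exact ha_pos
      · rw [hXn, hYn]; exact hab
      · rw [hXn]; exact ha_mex
      · rw [hXn, hYn]; exact hfresh_ab
      · -- mex property of the difference
        rw [hXn, hYn]
        intro m' hm0 hmd
        by_contra hcon
        push_neg at hcon
        have hmem : (a + m') ∈ {y | Q n a y} := by
          refine ⟨ha_pos, by omega, ?_⟩
          intro k hk1 hk2
          have hfa := hfresh_ab k hk1 hk2
          have hc := hcon k hk1 hk2
          have hXk := hXlt k hk1 hk2
          have hIk := hIH k hk1 hk2
          have hXYk : X k < Y k := hIk.2.1
          -- d k < m'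
          have hdk : Y k - X k < m' := by
            rcases Nat.lt_trichotomy (Y k - X k) m' with h | h | h
            · exact h
            · omega
            · obtain ⟨j, hj1, hj2, hj3⟩ := hIk.2.2.2.2 m' hm0 h
              have := hcon j hj1 (by omega)
              omega
          have hsub : a + m' - a = m' := by omega
          refine ⟨hfa.1, by omega, hfa.2.2.1, by omega, ?_, ?_⟩ <;> rw [hsub] <;> omega
        have := Nat.sInf_le hmem
        omega

lemma X_lt_Y (n : ℕ) (hn : 1 ≤ n) : X n < Y n := (inv_all n hn).2.1
lemma X_pos (n : ℕ) (hn : 1 ≤ n) : 0 < X n := (inv_all n hn).1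

lemma d_mono {k n : ℕ} (hk : 1 ≤ k) (hkn : k < n) : Y k - X k < Y n - X n := by
  have hn : 1 ≤ n := by omega
  have hfr := (inv_all n hn).2.2.2.1 k hk hkn
  rcases Nat.lt_trichotomy (Y k - X k) (Y n - X n) with h | h | h
  · exact h
  · exact absurd h hfr.2.2.2.2.1
  · have hd : 0 < Y n - X n := by
      have := X_lt_Y n hn; omega
    obtain ⟨j, hj1, hj2, hj3⟩ := (inv_all k hk).2.2.2.2 (Y n - X n) hd h
    have := (inv_all n hn).2.2.2.1 j hj1 (by omega)
    omega

lemma d_ge (n : ℕ) (hn : 1 ≤ n) : n ≤ Y n - X n := by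
  induction n, hn using Nat.le_induction with
  | base => simp [X_one, Y_one]
  | succ p hp ih =>
    have := d_mono hp (show p < p + 1 by omega)
    omega

theorem diff_sum_complementary :
    Disjoint {m : ℕ | ∃ n, 1 ≤ n ∧ Y n - X n = m} {m : ℕ | ∃ n, 1 ≤ n ∧ Y n + X n = m} ∧
    {m : ℕ | ∃ n, 1 ≤ n ∧ Y n - X n = m} ∪ {m : ℕ | ∃ n, 1 ≤ n ∧ Y n + X n = m}
      = {m : ℕ | 1 ≤ m} := by
  constructor
  · rw [Set.disjoint_left]
    rintro m ⟨n, hn, hd⟩ ⟨k, hk, hs⟩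
    have h1 := X_lt_Y k hk
    have h2 := X_pos k hk
    rcases Nat.lt_trichotomy k n with h | h | h
    · exact ((inv_all n hn).2.2.2.1 k hk h).2.2.2.2.2 (hs.trans hd.symm)
    · subst h; omega
    · have := d_mono hn h
      omega
  · ext m
    simp only [Set.mem_union, Set.mem_setOf_eq]
    constructor
    · rintro (⟨n, hn, hd⟩ | ⟨n, hn, hs⟩)
      · have := X_lt_Y n hn; omega
      · have := X_pos n hn; omega
    · intro hm
      have hd : m < Y (m + 1) - X (m + 1) := by
        have := d_ge (m + 1) (by omega); omega
      obtain ⟨k, hk1, hk2, hk3⟩ :=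
        (inv_all (m + 1) (by omega)).2.2.2.2 m hm hd
      rcases hk3 with h | h
      · exact Or.inl ⟨k, hk1, h⟩
      · exact Or.inr ⟨k, hk1, h⟩
end

section
/- For every integer n ≥ 1, X(n) = D_{n−1} + n, where D_m denotes the number of occurrences of the symbol 0 among the first m symbols TR[0..m−1] of the infinite Tribonacci word. -/
/-!
Put `x k = k + #₀(k) + 1` and `y k = nth₀ k + k + 2`, where `#ₐ(k)` counts the letters `a` in
`TR[0, k)` and `nthₐ k` is the position of the `k`-th letter `a` of TR.

For an infinite `p ⊆ ℕ`, the sequences `k + count p k` and `nth p j + j + 1` partition ℕ: list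
the naturals and insert a marker after each element of `p`; the number `k` then lands at position
`k + count p k` and the `j`-th marker at `nth p j + j + 1`.

Since TR is the fixed point of `0 ↦ 01, 1 ↦ 02, 2 ↦ 0`, the image of `TR[0, k)` is `TR[0, ℓ)`
with `ℓ = k + #₀(k) + #₁(k)`. So `nth₀ k = ℓ`, the `k`-th `1` follows the `ℓ`-th `0`, and
therefore `y k - x k = k + #₁(k) + 1` and `y k + x k = nth₁ k + k + 2`. Both `{x, y}` and
`{y - x, y + x}` thus split the positive integers into two increasing sequences. Then
`(x k, y k)` meets every constraint of the greedy rule, and any smaller candidate is an earlier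
`X`, `Y`, difference or sum, so `(X (k + 1), Y (k + 1)) = (x k, y k)`.
-/

open Classical

/-- The morphism 0 ↦ 01, 1 ↦ 02, 2 ↦ 0. -/
def tribMorph : ℕ → List ℕ
  | 0 => [0, 1]
  | 1 => [0, 2]
  | _ => [0]

/-- The infinite Tribonacci word TR = 0102010010201⋯, the fixed point of the
morphism 0 ↦ 01, 1 ↦ 02, 2 ↦ 0 starting with 0. -/
def TR (n : ℕ) : ℕ := ((fun l : List ℕ => (l.map tribMorph).flatten)^[n + 1] [0]).getD n 0

/-- For `n ≥ 1`, one more than the position (indexed from 0) of the `n`-th occurrence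
of the symbol `s` in TR; and `0` at `n = 0`. -/
noncomputable def posSeq (s : ℕ) (n : ℕ) : ℕ :=
  if n = 0 then 0 else Nat.nth (fun m => TR m = s) (n - 1) + 1

/-- `D m` is the number of occurrences of the symbol 0 among the first `m` symbols
`TR[0..m-1]` of the infinite Tribonacci word (OEIS A276796). -/
def D (m : ℕ) : ℕ := ((Finset.range m).filter (fun i => TR i = 0)).card

namespace Nat

variable {p : ℕ → Prop} [DecidablePred p]

theorem add_count_ne_nth_add_add_one (hp : (Set.ofPred p).Infinite) (k j : ℕ) :
    k + count p k ≠ nth p j + j + 1 := by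
  intro h
  rcases le_or_gt k (nth p j) with hk | hk
  · have := count_monotone p hk
    rw [count_nth_of_infinite hp] at this
    omega
  · have := count_monotone p (succ_le_of_lt hk)
    rw [count_nth_succ_of_infinite hp] at this
    omega

theorem exists_add_count_eq_or_exists_nth_add_eq (hp : (Set.ofPred p).Infinite) (v : ℕ) :
    (∃ k, k + count p k = v) ∨ ∃ j, nth p j + j + 1 = v := by
  induction v with
  | zero => exact Or.inl ⟨0, rfl⟩
  | succ v ih =>
    rcases ih with ⟨k, rfl⟩ | ⟨j, rfl⟩
    · by_cases hk : p k
      · exact Or.inr ⟨count p k, by rw [nth_count hk]⟩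
      · exact Or.inl ⟨k + 1, by rw [count_succ, if_neg hk]; ring⟩
    · exact Or.inl ⟨nth p j + 1, by rw [count_nth_succ_of_infinite hp]; ring⟩

end Nat

open Nat

lemma D_eq_count (m : ℕ) : D m = count (TR · = 0) m :=
  (count_eq_card_filter_range _ m).symm

namespace TR

def subst (l : List ℕ) : List ℕ := l.flatMap tribMorph

lemma subst_cons (a : ℕ) (l : List ℕ) : subst (a :: l) = tribMorph a ++ subst l :=
  List.flatMap_cons

lemma subst_append (u v : List ℕ) : subst (u ++ v) = subst u ++ subst v :=
  List.flatMap_append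

lemma subst_prefix_subst {u v : List ℕ} (h : u <+: v) : subst u <+: subst v := by
  obtain ⟨t, rfl⟩ := h
  exact ⟨subst t, (subst_append u t).symm⟩

lemma length_subst (l : List ℕ) : (subst l).length = l.length + l.count 0 + l.count 1 := by
  induction l with
  | nil => rfl
  | cons a l ih =>
    rw [subst_cons, List.length_append, ih]
    rcases a with _ | _ | a <;> simp [tribMorph] <;> omega

lemma count_zero_subst (l : List ℕ) : (subst l).count 0 = l.length := by
  induction l with
  | nil => rfl
  | cons a l ih =>
    rw [subst_cons, List.count_append, ih]
    rcases a with _ | _ | a <;> simp [tribMorph] <;> omega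

lemma count_one_subst (l : List ℕ) : (subst l).count 1 = l.count 0 := by
  induction l with
  | nil => rfl
  | cons a l ih =>
    rw [subst_cons, List.count_append, ih]
    rcases a with _ | _ | a <;> simp [tribMorph, add_comm]

def word (k : ℕ) : List ℕ := subst^[k] [0]

lemma word_succ (k : ℕ) : word (k + 1) = subst (word k) :=
  Function.iterate_succ_apply' _ _ _

lemma word_prefix_word_succ (k : ℕ) : word k <+: word (k + 1) := by
  induction k with
  | zero => exact ⟨[1], rfl⟩
  | succ k ih => rw [word_succ k, word_succ (k + 1)]; exact subst_prefix_subst ih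

lemma word_prefix_word_of_le {k j : ℕ} (h : k ≤ j) : word k <+: word j := by
  induction j, h using Nat.le_induction with
  | base => exact List.prefix_refl _
  | succ j _ ih => exact ih.trans (word_prefix_word_succ j)

lemma lt_length_word (k : ℕ) : k < (word k).length := by
  induction k with
  | zero => simp [word]
  | succ k ih =>
    have h0 : 0 < (word k).count 0 :=
      List.count_pos_iff.mpr ((word_prefix_word_of_le k.zero_le).subset (by simp [word]))
    rw [word_succ, length_subst]
    omega

lemma getElem_word {k n : ℕ} (hn : n < (word k).length) : (word k)[n] = TR n := by
  have hn' : n < (word (n + 1)).length := (lt_length_word _).trans' n.lt_succ_self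
  have hTR : TR n = (word (n + 1))[n] := List.getD_eq_getElem _ _ hn'
  rw [hTR]
  rcases le_total k (n + 1) with h | h
  · exact (word_prefix_word_of_le h).getElem hn
  · exact ((word_prefix_word_of_le h).getElem _).symm

def pref (m : ℕ) : List ℕ := (List.range m).map TR

@[simp]
lemma length_pref (m : ℕ) : (pref m).length = m := by
  simp [pref]

lemma pref_succ (m : ℕ) : pref (m + 1) = pref m ++ [TR m] := by
  simp [pref, List.range_succ]

lemma getD_pref {m i : ℕ} (h : i < m) : (pref m).getD i 0 = TR i := by
  simp [pref, h]

lemma count_pref (a m : ℕ) : (pref m).count a = count (TR · = a) m := by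
  induction m with
  | zero => rfl
  | succ m ih =>
    rw [pref_succ, List.count_append, ih, count_succ]
    simp [List.count_singleton]

lemma eq_pref_of_prefix_word {u : List ℕ} {k : ℕ} (h : u <+: word k) : u = pref u.length :=
  List.ext_getElem (by simp) fun i h₁ _ => by simp [pref, h.getElem h₁, getElem_word]

lemma pref_prefix_word (m : ℕ) : pref m <+: word m := by
  have h : (word m).take m = pref m :=
    List.ext_getElem (by simpa using (lt_length_word m).le) fun i h₁ _ => by
      simp [pref, getElem_word]
  exact h ▸ List.take_prefix _ _

def substPos (m : ℕ) : ℕ := m + count (TR · = 0) m + count (TR · = 1) m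

lemma subst_pref (m : ℕ) : subst (pref m) = pref (substPos m) := by
  have h := eq_pref_of_prefix_word (u := subst (pref m)) (k := m + 1) <| by
    rw [word_succ]; exact subst_prefix_subst (pref_prefix_word m)
  rwa [length_subst, length_pref, count_pref, count_pref] at h

lemma pref_substPos_succ (m : ℕ) :
    pref (substPos (m + 1)) = pref (substPos m) ++ tribMorph (TR m) := by
  rw [← subst_pref, ← subst_pref, pref_succ, subst_append, subst_cons]
  simp [subst]

lemma count_zero_substPos (m : ℕ) : count (TR · = 0) (substPos m) = m := by
  rw [← count_pref, ← subst_pref, count_zero_subst, length_pref]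

lemma count_one_substPos (m : ℕ) : count (TR · = 1) (substPos m) = count (TR · = 0) m := by
  rw [← count_pref, ← subst_pref, count_one_subst, count_pref]

lemma TR_substPos_add {m i : ℕ} (hi : i < (tribMorph (TR m)).length) :
    TR (substPos m + i) = (tribMorph (TR m)).getD i 0 := by
  have hlen := congrArg List.length (pref_substPos_succ m)
  rw [length_pref, List.length_append, length_pref] at hlen
  rw [← getD_pref (m := substPos (m + 1)) (by omega), pref_substPos_succ,
    List.getD_append_right _ _ _ _ (by simp)]
  simp

lemma TR_substPos (m : ℕ) : TR (substPos m) = 0 := by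
  have head : ∀ a, 0 < (tribMorph a).length ∧ (tribMorph a).getD 0 0 = 0 := by
    intro a; rcases a with _ | _ | a <;> simp [tribMorph]
  exact (TR_substPos_add (head _).1).trans (head _).2

lemma TR_substPos_add_one {m : ℕ} (h : TR m = 0) : TR (substPos m + 1) = 1 := by
  simpa [h, tribMorph] using TR_substPos_add (m := m) (i := 1) (by simp [h, tribMorph])

lemma le_substPos (m : ℕ) : m ≤ substPos m := by
  unfold substPos; omega

lemma nth_zero_eq_substPos (m : ℕ) : nth (TR · = 0) m = substPos m := by
  conv_lhs => rw [← count_zero_substPos m]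
  exact nth_count (TR_substPos m)

lemma nth_one_eq_substPos (m : ℕ) : nth (TR · = 1) m = substPos (substPos m) + 1 := by
  have hcount : count (TR · = 1) (substPos (substPos m) + 1) = m := by
    rw [count_succ, if_neg (by rw [TR_substPos]; omega), Nat.add_zero, count_one_substPos,
      count_zero_substPos]
  conv_lhs => rw [← hcount]
  exact nth_count (TR_substPos_add_one (TR_substPos m))

lemma infinite_setOf_eq_zero : (Set.ofPred (TR · = 0)).Infinite :=
  Set.infinite_of_forall_exists_gt fun a =>
    ⟨substPos (a + 1), TR_substPos _, (le_substPos _).trans_lt' a.lt_succ_self⟩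

lemma infinite_setOf_eq_one : (Set.ofPred (TR · = 1)).Infinite :=
  Set.infinite_of_forall_exists_gt fun a =>
    ⟨substPos (substPos a) + 1, TR_substPos_add_one (TR_substPos a),
      Nat.lt_succ_of_le ((le_substPos a).trans (le_substPos _))⟩

end TR

def xClosed (k : ℕ) : ℕ := k + count (TR · = 0) k + 1

noncomputable def yClosed (k : ℕ) : ℕ := nth (TR · = 0) k + k + 2

lemma yClosed_sub_xClosed (k : ℕ) : yClosed k - xClosed k = k + count (TR · = 1) k + 1 := by
  rw [yClosed, xClosed, TR.nth_zero_eq_substPos, TR.substPos]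
  omega

lemma yClosed_add_xClosed (k : ℕ) : yClosed k + xClosed k = nth (TR · = 1) k + k + 2 := by
  have hpos : TR.substPos (TR.substPos k) = TR.substPos k + k + count (TR · = 0) k := by
    change TR.substPos k + count _ (TR.substPos k) + count _ (TR.substPos k) = _
    rw [TR.count_zero_substPos, TR.count_one_substPos]
  rw [yClosed, xClosed, TR.nth_one_eq_substPos, TR.nth_zero_eq_substPos, hpos]
  omega

lemma xClosed_lt_yClosed (k : ℕ) : xClosed k < yClosed k := by
  have := yClosed_sub_xClosed k
  omega

lemma xClosed_strictMono : StrictMono xClosed := fun a b h => by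
  have := count_monotone (TR · = 0) h.le
  unfold xClosed; omega

lemma yClosed_strictMono : StrictMono yClosed := fun a b h => by
  have := nth_strictMono TR.infinite_setOf_eq_zero h
  unfold yClosed; omega

lemma strictMono_yClosed_sub_xClosed : StrictMono fun k => yClosed k - xClosed k := by
  intro a b h
  have := count_monotone (TR · = 1) h.le
  simp only [yClosed_sub_xClosed]; omega

lemma strictMono_yClosed_add_xClosed : StrictMono fun k => yClosed k + xClosed k := by
  intro a b h
  have := nth_strictMono TR.infinite_setOf_eq_one h
  simp only [yClosed_add_xClosed]; omega

lemma xClosed_ne_yClosed (j k : ℕ) : xClosed j ≠ yClosed k := by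
  have := add_count_ne_nth_add_add_one TR.infinite_setOf_eq_zero j k
  unfold xClosed yClosed; omega

lemma exists_xClosed_or_yClosed {v : ℕ} (hv : 0 < v) :
    (∃ k, xClosed k = v) ∨ ∃ k, yClosed k = v := by
  rcases exists_add_count_eq_or_exists_nth_add_eq TR.infinite_setOf_eq_zero (v - 1) with
    ⟨k, hk⟩ | ⟨k, hk⟩
  · exact Or.inl ⟨k, by unfold xClosed; omega⟩
  · exact Or.inr ⟨k, by unfold yClosed; omega⟩

lemma yClosed_sub_xClosed_ne_add (j k : ℕ) : yClosed j - xClosed j ≠ yClosed k + xClosed k := by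
  have := add_count_ne_nth_add_add_one TR.infinite_setOf_eq_one j k
  rw [yClosed_sub_xClosed, yClosed_add_xClosed]; omega

lemma exists_yClosed_sub_xClosed_or_add {w : ℕ} (hw : 0 < w) :
    (∃ k, yClosed k - xClosed k = w) ∨ ∃ k, yClosed k + xClosed k = w := by
  simp only [yClosed_sub_xClosed, yClosed_add_xClosed]
  rcases exists_add_count_eq_or_exists_nth_add_eq TR.infinite_setOf_eq_one (w - 1) with
    ⟨k, hk⟩ | ⟨k, hk⟩
  · exact Or.inl ⟨k, by omega⟩
  · exact Or.inr ⟨k, by omega⟩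

def Admissible (N x y : ℕ) : Prop :=
  0 < x ∧ x < y ∧
  ∀ k, 1 ≤ k → k < N →
    (XY k).1 ≠ x ∧ (XY k).1 ≠ y ∧ (XY k).2 ≠ x ∧ (XY k).2 ≠ y ∧
    (XY k).2 - (XY k).1 ≠ y - x ∧ (XY k).2 + (XY k).1 ≠ y - x

lemma XY_add_two (n : ℕ) :
    XY (n + 2) = (sInf {x | ∃ y, Admissible (n + 2) x y},
      sInf {y | Admissible (n + 2) (sInf {x | ∃ y, Admissible (n + 2) x y}) y}) := by
  rw [XY]
  rfl

lemma admissible_succ_iff {n : ℕ}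
    (hprev : ∀ k < n, XY (k + 1) = (xClosed k, yClosed k))
    (x y : ℕ) :
    Admissible (n + 1) x y ↔ 0 < x ∧ x < y ∧ ∀ k < n,
      xClosed k ≠ x ∧ xClosed k ≠ y ∧ yClosed k ≠ x ∧ yClosed k ≠ y ∧
      yClosed k - xClosed k ≠ y - x ∧ yClosed k + xClosed k ≠ y - x := by
  refine and_congr_right fun _ => and_congr_right fun _ =>
    ⟨fun h k hk => ?_, fun h k hk₁ hk₂ => ?_⟩
  · simpa [hprev k hk] using h (k + 1) (by omega) (by omega)
  · obtain ⟨k, rfl⟩ : ∃ k', k = k' + 1 := ⟨k - 1, by omega⟩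
    simpa [hprev k (by omega)] using h k (by omega)

lemma admissible_closed {n : ℕ}
    (hprev : ∀ k < n, XY (k + 1) = (xClosed k, yClosed k)) :
    Admissible (n + 1) (xClosed n) (yClosed n) := by
  rw [admissible_succ_iff hprev]
  refine ⟨by unfold xClosed; omega, xClosed_lt_yClosed n, fun k hk =>
    ⟨?_, ?_, ?_, ?_, ?_, ?_⟩⟩
  · exact (xClosed_strictMono hk).ne
  · exact ((xClosed_strictMono hk).trans (xClosed_lt_yClosed n)).ne
  · exact (xClosed_ne_yClosed n k).symm
  · exact (yClosed_strictMono hk).ne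
  · exact (strictMono_yClosed_sub_xClosed hk).ne
  · exact (yClosed_sub_xClosed_ne_add n k).symm

lemma not_admissible_of_lt_xClosed {n : ℕ}
    (hprev : ∀ k < n, XY (k + 1) = (xClosed k, yClosed k))
    {x y : ℕ} (hx : x < xClosed n) : ¬ Admissible (n + 1) x y := by
  rw [admissible_succ_iff hprev]
  rintro ⟨hx₀, -, hfresh⟩
  rcases exists_xClosed_or_yClosed hx₀ with ⟨k, rfl⟩ | ⟨k, rfl⟩
  · exact (hfresh k (xClosed_strictMono.lt_iff_lt.mp hx)).1 rfl
  · have hk : k < n := yClosed_strictMono.lt_iff_lt.mp (hx.trans (xClosed_lt_yClosed n))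
    exact (hfresh k hk).2.2.1 rfl

lemma not_admissible_of_lt_yClosed {n : ℕ}
    (hprev : ∀ k < n, XY (k + 1) = (xClosed k, yClosed k))
    {y : ℕ} (hy : y < yClosed n) : ¬ Admissible (n + 1) (xClosed n) y := by
  rw [admissible_succ_iff hprev]
  rintro ⟨-, hxy, hfresh⟩
  rcases exists_yClosed_sub_xClosed_or_add (w := y - xClosed n) (by omega) with
    ⟨k, hk⟩ | ⟨k, hk⟩
  · have hkn : k < n :=
      strictMono_yClosed_sub_xClosed.lt_iff_lt.mp (show _ < yClosed n - xClosed n by omega)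
    exact (hfresh k hkn).2.2.2.2.1 hk
  · have hkn : k < n :=
      strictMono_yClosed_add_xClosed.lt_iff_lt.mp (show _ < yClosed n + xClosed n by omega)
    exact (hfresh k hkn).2.2.2.2.2 hk

theorem XY_succ (k : ℕ) : XY (k + 1) = (xClosed k, yClosed k) := by
  induction k using Nat.strong_induction_on with
  | _ n ih =>
    rcases n with _ | m
    · simp [XY, xClosed, yClosed, TR.nth_zero_eq_substPos, TR.substPos]
    · have hx : sInf {x | ∃ y, Admissible (m + 2) x y} = xClosed (m + 1) :=
        IsLeast.csInf_eq ⟨⟨_, admissible_closed ih⟩, fun x ⟨_, hxy⟩ =>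
          not_lt.mp fun h => not_admissible_of_lt_xClosed ih h hxy⟩
      have hy : sInf {y | Admissible (m + 2) (xClosed (m + 1)) y} = yClosed (m + 1) :=
        IsLeast.csInf_eq ⟨admissible_closed ih, fun y hy =>
          not_lt.mp fun h => not_admissible_of_lt_yClosed ih h hy⟩
      rw [XY_add_two, hx, hy]

theorem X_eq_D_add_n (n : ℕ) (hn : 1 ≤ n) : X n = D (n - 1) + n := by
  obtain ⟨k, rfl⟩ : ∃ k, n = k + 1 := ⟨n - 1, by omega⟩
  rw [X, XY_succ, D_eq_count, xClosed, Nat.add_sub_cancel]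
  omega
end

section
/- Every nonnegative integer N has a unique representation N = Σ_{2 ≤ i ≤ t} e_i T_i where each e_i ∈ {0,1}, the leading digit satisfies e_t = 1 (or the representation is empty when N = 0), and no three consecutive digits are equal to 1 (i.e., e_i e_{i+1} e_{i+2} ≠ 1·1·1 for all i ≥ 2). -/
/-- The Tribonacci numbers: T 0 = 0, T 1 = 1, T 2 = 1,
and T n = T (n-1) + T (n-2) + T (n-3) for n ≥ 3. -/
def T : ℕ → ℕ
  | 0 => 0
  | 1 => 1
  | 2 => 1
  | n + 3 => T (n + 2) + T (n + 1) + T n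

lemma T_pos : ∀ n, 1 ≤ n → 0 < T n := by
  intro n
  induction n using Nat.strong_induction_on with
  | _ n ih =>
    match n with
    | 0 => omega
    | 1 => intro _; simp [T]
    | 2 => intro _; simp [T]
    | n + 3 =>
      intro _
      have := ih (n + 1) (by omega) (by omega)
      simp only [T]; omega

lemma T_succ_lt : ∀ n, 2 ≤ n → T n < T (n + 1) := by
  intro n hn
  obtain ⟨u, rfl⟩ : ∃ u, n = u + 2 := ⟨n - 2, by omega⟩
  have := T_pos (u + 1) (by omega)
  show T (u + 2) < T (u + 3)
  simp only [T]; omega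

lemma T_lt {m n : ℕ} (hm : 2 ≤ m) (h : m < n) : T m < T n := by
  induction n with
  | zero => omega
  | succ k ih =>
    rcases Nat.lt_or_ge m k with h' | h'
    · exact lt_trans (ih h') (T_succ_lt k (by omega))
    · have : m = k := by omega
      subst this
      exact T_succ_lt m hm

lemma T_le {m n : ℕ} (hm : 2 ≤ m) (h : m ≤ n) : T m ≤ T n := by
  rcases Nat.lt_or_ge m n with h' | h'
  · exact le_of_lt (T_lt hm h')
  · have : m = n := by omega
    subst this; rfl

lemma T_step : ∀ n, T n ≤ T (n + 1) := by
  intro n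
  match n with
  | 0 => simp [T]
  | 1 => simp [T]
  | n + 2 => exact le_of_lt (T_succ_lt (n + 2) (by omega))

lemma T_add : ∀ u, T (u + 1) + T u ≤ T (u + 2) := by
  intro u
  match u with
  | 0 => simp [T]
  | u + 1 =>
    show T (u + 2) + T (u + 1) ≤ T (u + 3)
    simp only [T]; omega

lemma le_T : ∀ n, n ≤ T (n + 2) := by
  intro n
  induction n with
  | zero => simp
  | succ k ih =>
    have := T_pos (k + 1) (by omega)
    show k + 1 ≤ T (k + 3)
    simp only [T]; omega

/-- Key bound: a valid representation with indices ≤ t sums to less than T (t+1). -/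
lemma sum_lt_T : ∀ t : ℕ, ∀ s : Finset ℕ, (∀ i ∈ s, 2 ≤ i) →
    (∀ i, ¬(i ∈ s ∧ i + 1 ∈ s ∧ i + 2 ∈ s)) → (∀ i ∈ s, i ≤ t) →
    ∑ i ∈ s, T i < T (t + 1) := by
  intro t
  induction t using Nat.strong_induction_on with
  | _ t ih =>
    intro s h2 h3 hb
    by_cases ht : t ∈ s
    · have ht2 : 2 ≤ t := h2 t ht
      by_cases ht1 : t - 1 ∈ s
      · -- both t and t-1 in s, so t-2 not in s
        have ht3 : 2 ≤ t - 1 := h2 _ ht1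
        obtain ⟨u, rfl⟩ : ∃ u, t = u + 3 := ⟨t - 3, by omega⟩
        have htn : u + 1 ∉ s := by
          intro hc
          exact h3 (u + 1) ⟨hc, by simpa using ht1, by simpa using ht⟩
        set s' := ((s.erase (u + 3)).erase (u + 2)) with hs'
        have hsub : ∀ i ∈ s', i ∈ s := fun i hi =>
          Finset.mem_of_mem_erase (Finset.mem_of_mem_erase hi)
        have hb' : ∀ i ∈ s', i ≤ u := by
          intro i hi
          have e1 : i ≠ u + 2 := Finset.ne_of_mem_erase hi
          have e2 : i ≠ u + 3 := Finset.ne_of_mem_erase (Finset.mem_of_mem_erase hi)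
          have e3 : i ≠ u + 1 := fun h => htn (h ▸ hsub i hi)
          have := hb i (hsub i hi)
          omega
        have hlt : ∑ i ∈ s', T i < T (u + 1) := by
          have := ih u (by omega) s' (fun i hi => h2 i (hsub i hi))
            (fun i hc => h3 i ⟨hsub _ hc.1, hsub _ hc.2.1, hsub _ hc.2.2⟩) hb'
          simpa using this
        have hm2 : u + 2 ∈ s.erase (u + 3) :=
          Finset.mem_erase.mpr ⟨by omega, by simpa using ht1⟩
        have hsum : ∑ i ∈ s, T i = T (u + 3) + (T (u + 2) + ∑ i ∈ s', T i) := by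
          rw [← Finset.add_sum_erase _ _ ht, ← Finset.add_sum_erase _ _ hm2]
        have hT : T (u + 3 + 1) = T (u + 3) + T (u + 2) + T (u + 1) := rfl
        omega
      · -- t in s, t-1 not in s
        obtain ⟨u, rfl⟩ : ∃ u, t = u + 2 := ⟨t - 2, by omega⟩
        set s' := s.erase (u + 2) with hs'
        have hsub : ∀ i ∈ s', i ∈ s := fun i hi => Finset.mem_of_mem_erase hi
        have hb' : ∀ i ∈ s', i ≤ u := by
          intro i hi
          have e1 : i ≠ u + 2 := Finset.ne_of_mem_erase hi
          have e2 : i ≠ u + 1 := fun h => ht1 (by simpa [h] using hsub i hi)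
          have := hb i (hsub i hi)
          omega
        have hlt : ∑ i ∈ s', T i < T (u + 1) := by
          have := ih u (by omega) s' (fun i hi => h2 i (hsub i hi))
            (fun i hc => h3 i ⟨hsub _ hc.1, hsub _ hc.2.1, hsub _ hc.2.2⟩) hb'
          simpa using this
        have hsum : ∑ i ∈ s, T i = T (u + 2) + ∑ i ∈ s', T i :=
          (Finset.add_sum_erase _ _ ht).symm
        have hT : T (u + 2 + 1) = T (u + 2) + T (u + 1) + T u := rfl
        omega
    · -- t not in s
      match t with
      | 0 =>
        have : s = ∅ := by
          apply Finset.eq_empty_iff_forall_notMem.mpr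
          intro i hi
          have := h2 i hi; have := hb i hi; omega
        subst this; simp [T]
      | t + 1 =>
        have hb' : ∀ i ∈ s, i ≤ t := by
          intro i hi
          have := hb i hi
          have : i ≠ t + 1 := fun h => ht (h ▸ hi)
          omega
        have := ih t (by omega) s h2 h3 hb'
        calc ∑ i ∈ s, T i < T (t + 1) := this
          _ ≤ T (t + 2) := T_step _

lemma exists_rep : ∀ N : ℕ, ∃ s : Finset ℕ, (∀ i ∈ s, 2 ≤ i) ∧
    (∀ i, ¬(i ∈ s ∧ i + 1 ∈ s ∧ i + 2 ∈ s)) ∧ N = ∑ i ∈ s, T i ∧ ∀ i ∈ s, T i ≤ N := by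
  intro N
  induction N using Nat.strong_induction_on with
  | _ N ih =>
    rcases Nat.eq_zero_or_pos N with rfl | hN
    · exact ⟨∅, by simp⟩
    set t := Nat.findGreatest (fun k => T k ≤ N) (N + 2) with hts
    clear_value t
    have hT2 : T 2 = 1 := rfl
    have hP : T t ≤ N := by
      rw [hts]
      exact Nat.findGreatest_spec (P := fun k => T k ≤ N) (m := 2) (by omega) (by omega)
    have ht2 : 2 ≤ t := by
      rw [hts]
      exact Nat.le_findGreatest (by omega) (by omega)
    have hlt : N < T (t + 1) := by
      by_contra h
      push_neg at h
      rcases Nat.lt_or_ge (t + 1) (N + 3) with hc | hc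
      · exact Nat.findGreatest_is_greatest (P := fun k => T k ≤ N) (n := N + 2)
          (k := t + 1) (by omega) (by omega) h
      · have h1 : N + 1 ≤ T (N + 3) := le_T (N + 1)
        have h2 : T (N + 3) ≤ T (t + 1) := T_le (by omega) (by omega)
        omega
    obtain ⟨u, rfl⟩ : ∃ u, t = u + 2 := ⟨t - 2, by omega⟩
    have hTpos : 0 < T (u + 2) := T_pos _ (by omega)
    set M := N - T (u + 2) with hM
    have hMN : M < N := by omega
    obtain ⟨s₀, h2₀, h3₀, hsum₀, hle₀⟩ := ih M hMN
    have hMlt : M < T (u + 2) := by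
      have h1 : T (u + 2 + 1) = T (u + 2) + T (u + 1) + T u := rfl
      have h2 := T_add u
      omega
    have hilt : ∀ i ∈ s₀, i < u + 2 := by
      intro i hi
      by_contra h
      push_neg at h
      have := T_le (show 2 ≤ u + 2 by omega) h
      have := hle₀ i hi
      omega
    have htns : u + 2 ∉ s₀ := fun h => by have := hilt _ h; omega
    refine ⟨insert (u + 2) s₀, ?_, ?_, ?_, ?_⟩
    · intro i hi
      rcases Finset.mem_insert.mp hi with rfl | hi
      · omega
      · exact h2₀ i hi
    · rintro i ⟨hi, hi1, hi2⟩
      have mem : ∀ j, j ∈ insert (u + 2) s₀ → j = u + 2 ∨ (j ∈ s₀ ∧ j < u + 2) := by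
        intro j hj
        rcases Finset.mem_insert.mp hj with rfl | hj
        · exact Or.inl rfl
        · exact Or.inr ⟨hj, hilt j hj⟩
      rcases mem _ hi2 with he | ⟨hm2, hl2⟩
      · -- i + 2 = u + 2, so i, i+1 ∈ s₀
        have hiu : i = u := by omega
        subst hiu
        have hi' : i ∈ s₀ := by
          rcases mem _ hi with h' | ⟨h', _⟩
          · omega
          · exact h'
        have hi1' : i + 1 ∈ s₀ := by
          rcases mem _ hi1 with h' | ⟨h', _⟩
          · omega
          · exact h'
        have hpair : ({i, i + 1} : Finset ℕ) ⊆ s₀ := by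
          intro j hj
          rcases Finset.mem_insert.mp hj with rfl | hj
          · exact hi'
          · simp only [Finset.mem_singleton] at hj; exact hj ▸ hi1'
        have hps : T i + T (i + 1) ≤ ∑ j ∈ s₀, T j := by
          have := Finset.sum_le_sum_of_subset (f := T) hpair
          rwa [Finset.sum_pair (by omega : i ≠ i + 1)] at this
        have hTi3 : T (i + 3) = T (i + 2) + T (i + 1) + T i := rfl
        have heq2 : T (i + 2 + 1) = T (i + 3) := rfl
        omega
      · rcases mem _ hi with he | ⟨hm0, _⟩
        · omega
        rcases mem _ hi1 with he | ⟨hm1, _⟩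
        · omega
        exact h3₀ i ⟨hm0, hm1, hm2⟩
    · rw [Finset.sum_insert htns]
      omega
    · intro i hi
      rcases Finset.mem_insert.mp hi with rfl | hi
      · exact hP
      · have := hle₀ i hi; omega

lemma rep_unique : ∀ N : ℕ, ∀ s s' : Finset ℕ,
    ((∀ i ∈ s, 2 ≤ i) ∧ (∀ i, ¬(i ∈ s ∧ i + 1 ∈ s ∧ i + 2 ∈ s)) ∧ N = ∑ i ∈ s, T i) →
    ((∀ i ∈ s', 2 ≤ i) ∧ (∀ i, ¬(i ∈ s' ∧ i + 1 ∈ s' ∧ i + 2 ∈ s')) ∧ N = ∑ i ∈ s', T i) →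
    s = s' := by
  intro N
  induction N using Nat.strong_induction_on with
  | _ N ih =>
    rintro s s' ⟨h2, h3, hsum⟩ ⟨h2', h3', hsum'⟩
    rcases Finset.eq_empty_or_nonempty s with rfl | hne
    · simp only [Finset.sum_empty] at hsum
      subst hsum
      symm
      apply Finset.eq_empty_iff_forall_notMem.mpr
      intro i hi
      have h0 : T i = 0 := by
        have := Finset.sum_eq_zero_iff.mp hsum'.symm
        exact this i hi
      have := T_pos i (by have := h2' i hi; omega)
      omega
    rcases Finset.eq_empty_or_nonempty s' with rfl | hne'
    · simp only [Finset.sum_empty] at hsum'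
      subst hsum'
      exfalso
      obtain ⟨i, hi⟩ := hne
      have h0 : T i = 0 := by
        have := Finset.sum_eq_zero_iff.mp hsum.symm
        exact this i hi
      have := T_pos i (by have := h2 i hi; omega)
      omega
    set t := s.max' hne with htd
    set t' := s'.max' hne' with htd'
    clear_value t t'
    have htm : t ∈ s := by rw [htd]; exact s.max'_mem hne
    have htm' : t' ∈ s' := by rw [htd']; exact s'.max'_mem hne'
    have ht2 : 2 ≤ t := h2 t htm
    have ht2' : 2 ≤ t' := h2' t' htm'
    have hlow : T t ≤ N := by
      rw [hsum]
      exact Finset.single_le_sum (fun i _ => Nat.zero_le _) htm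
    have hlow' : T t' ≤ N := by
      rw [hsum']
      exact Finset.single_le_sum (fun i _ => Nat.zero_le _) htm'
    have hhigh : N < T (t + 1) := by
      rw [hsum]
      exact sum_lt_T t s h2 h3 (fun i hi => by rw [htd]; exact s.le_max' i hi)
    have hhigh' : N < T (t' + 1) := by
      rw [hsum']
      exact sum_lt_T t' s' h2' h3' (fun i hi => by rw [htd']; exact s'.le_max' i hi)
    have key : ∀ a b : ℕ, 2 ≤ a → N < T (a + 1) → T b ≤ N → ¬ a < b := by
      intro a b ha hNa hbN hab
      have : T (a + 1) ≤ T b := T_le (by omega) (by omega)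
      omega
    have htt : t = t' := by
      have h1 := key t t' ht2 hhigh hlow'
      have h2 := key t' t ht2' hhigh' hlow
      omega
    subst htt
    have hTpos : 0 < T t := T_pos t (by omega)
    have hers : s.erase t = s'.erase t := by
      apply ih (N - T t) (by omega)
      · refine ⟨fun i hi => h2 i (Finset.mem_of_mem_erase hi),
          fun i hc => h3 i ⟨Finset.mem_of_mem_erase hc.1, Finset.mem_of_mem_erase hc.2.1,
            Finset.mem_of_mem_erase hc.2.2⟩, ?_⟩
        have := (Finset.add_sum_erase _ T htm).symm
        omega
      · refine ⟨fun i hi => h2' i (Finset.mem_of_mem_erase hi),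
          fun i hc => h3' i ⟨Finset.mem_of_mem_erase hc.1, Finset.mem_of_mem_erase hc.2.1,
            Finset.mem_of_mem_erase hc.2.2⟩, ?_⟩
        have := (Finset.add_sum_erase _ T htm').symm
        omega
    calc s = insert t (s.erase t) := (Finset.insert_erase htm).symm
      _ = insert t (s'.erase t) := by rw [hers]
      _ = s' := Finset.insert_erase htm'

/-- Every nonnegative integer has a unique Tribonacci representation:
a sum of Tribonacci numbers `T i` with `i ≥ 2` over a set of indices containing
no three consecutive integers (the leading digit condition `e_t = 1`, and
`e_i ∈ {0,1}`, are automatic for a representation by a set of indices; the set is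
empty for `N = 0`). -/
theorem tribonacci_representation_unique (N : ℕ) :
    ∃! s : Finset ℕ,
      (∀ i ∈ s, 2 ≤ i) ∧
      (∀ i, ¬(i ∈ s ∧ i + 1 ∈ s ∧ i + 2 ∈ s)) ∧
      N = ∑ i ∈ s, T i := by
  obtain ⟨s, h2, h3, hsum, _⟩ := exists_rep N
  exact ⟨s, ⟨h2, h3, hsum⟩, fun s' h' => rep_unique N s' s h' ⟨h2, h3, hsum⟩⟩
end
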